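/- arXiv:1505.00355 — 5 statements merged into one kernel-verified Lean document; each statement's English description precedes it below -/
import Mathlib

section
/- Let (\gamma_k)_{k=0}^{\infty} be a sequence of real numbers, and define S(k) = \sum_{j=0}^{k} \gamma_j and A(k) = S(k)/(k+1). If \{A(k)\}_{k=0}^{\infty} is a multiplier sequence, then \{S(k)\}_{k=0}^{\infty} is a multiplier sequence. -/
/-- The polynomial obtained by applying the sequence `γ` coefficientwise:
`T[∑ aₖ xᵏ] = ∑ γₖ aₖ xᵏ`. -/
noncomputable def applySeq (γ : ℕ → ℝ) (p : Polynomial ℝ) : Polynomial ℝ :=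
  ∑ k ∈ Finset.range (p.natDegree + 1), Polynomial.C (γ k * p.coeff k) * Polynomial.X ^ k

/-- A real polynomial has only real roots (over `ℂ`). -/
def RealRooted (p : Polynomial ℝ) : Prop :=
  ∀ z : ℂ, Polynomial.aeval z p = 0 → z.im = 0

/-- A classical multiplier sequence. -/
def IsMultiplierSequence (γ : ℕ → ℝ) : Prop :=
  ∀ p : Polynomial ℝ, RealRooted p → RealRooted (applySeq γ p)

/-!
Since `S(k) = (k + 1) A(k)`, we have `applySeq S p = (X * q)'` with `q = applySeq A p`.
If `p` is real-rooted then so are `q` and `X * q`, and by Rolle's theorem so is `(X * q)'`.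
-/

open Polynomial

theorem coeff_applySeq (γ : ℕ → ℝ) (p : ℝ[X]) (n : ℕ) :
    (applySeq γ p).coeff n = γ n * p.coeff n := by
  simp only [applySeq, finsetSum_coeff, coeff_C_mul_X_pow, Finset.sum_ite_eq,
    Finset.mem_range, ite_eq_left_iff, not_lt]
  intro hn
  rw [coeff_eq_zero_of_natDegree_lt (by omega), mul_zero]

theorem applySeq_succ_mul (A : ℕ → ℝ) (p : ℝ[X]) :
    applySeq (fun k => ((k : ℝ) + 1) * A k) p = derivative (X * applySeq A p) := by
  ext n
  rw [coeff_applySeq, coeff_derivative, coeff_X_mul, coeff_applySeq]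
  ring

theorem RealRooted.ne_zero {p : ℝ[X]} (hp : RealRooted p) : p ≠ 0 := by
  rintro rfl
  simpa using hp Complex.I (by simp)

theorem realRooted_iff_splits {p : ℝ[X]} (hp : p ≠ 0) : RealRooted p ↔ p.Splits := by
  constructor
  · intro h
    refine Splits.of_splits_map (algebraMap ℝ ℂ) (IsAlgClosed.splits _) fun z hz => ?_
    rw [mem_roots (map_ne_zero hp), IsRoot, eval_map_algebraMap] at hz
    exact ⟨z.re, Complex.ext (by simp) (by simp [h z hz])⟩
  · intro h z hz
    rw [← eval_map_algebraMap] at hz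
    obtain ⟨x, rfl⟩ := h.mem_range_of_isRoot hp hz
    simp

theorem Polynomial.Splits.derivative_of_real {p : ℝ[X]} (hp : p.Splits) :
    p.derivative.Splits := by
  rw [splits_iff_card_roots] at hp ⊢
  have rolle := card_roots_le_derivative p
  have := natDegree_derivative_le p
  have := card_roots' p.derivative
  omega

theorem RealRooted.derivative_X_mul {q : ℝ[X]} (hq : RealRooted q) :
    RealRooted (derivative (X * q)) := by
  have hq0 := hq.ne_zero
  have hdeg : (X * q).natDegree ≠ 0 := by
    rw [natDegree_X_mul hq0]; omega
  rw [realRooted_iff_splits (derivative_ne_zero.mpr hdeg)]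
  exact (Splits.X.mul ((realRooted_iff_splits hq0).mp hq)).derivative_of_real

theorem sum_ms_of_average_ms (γ : ℕ → ℝ)
    (hA : IsMultiplierSequence
      (fun k => (∑ j ∈ Finset.range (k + 1), γ j) / ((k : ℝ) + 1))) :
    IsMultiplierSequence (fun k => ∑ j ∈ Finset.range (k + 1), γ j) := by
  intro p hp
  have hS : (fun k => ∑ j ∈ Finset.range (k + 1), γ j) =
      fun k : ℕ => ((k : ℝ) + 1) * ((∑ j ∈ Finset.range (k + 1), γ j) / ((k : ℝ) + 1)) := by
    funext k
    field_simp
  rw [hS, applySeq_succ_mul]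
  exact (hA p hp).derivative_X_mul
end

section
/- For every real number x, \sum_{n=1}^{\infty} \frac{\sqrt{n}}{n! \, n!} x^n = -\frac{1}{2\sqrt{\pi}} \int_0^{\infty} \left[ f(x,u) - f(x,0) \right] u^{-3/2} \, du, where f(x,t) := \sum_{n=0}^{\infty} \frac{x^n e^{-nt}}{n! \, n!}. -/
open Real MeasureTheory Set Filter Topology in
private lemma sqb_intG (c : ℝ) (hc : 0 < c) :
    IntegrableOn (fun u : ℝ => u ^ (-(1:ℝ)/2) * Real.exp (-(c * u))) (Ioi 0) := by
  have h := integrableOn_rpow_mul_exp_neg_mul_rpow (p := 1) (s := -(1:ℝ)/2) (b := c)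
    (by norm_num) zero_lt_one hc
  simpa [Real.rpow_one] using h

open Real MeasureTheory Set Filter Topology in
private lemma sqb_valG (c : ℝ) (hc : 0 < c) :
    ∫ u in Ioi (0:ℝ), u ^ (-(1:ℝ)/2) * Real.exp (-(c * u))
      = Real.sqrt Real.pi / Real.sqrt c := by
  have h := Real.integral_rpow_mul_exp_neg_mul_Ioi (a := 1/2) (r := c) (by norm_num) hc
  rw [show (1:ℝ)/2 - 1 = -(1:ℝ)/2 by norm_num] at h
  rw [h, Real.Gamma_one_half_eq, ← Real.sqrt_eq_rpow, Real.sqrt_div' 1 hc.le, Real.sqrt_one,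
    one_div, div_eq_inv_mul]

section Aux
open Real MeasureTheory Set Filter Topology

lemma contOnKey (c : ℝ) (s : Set ℝ) (hs : s ⊆ Ioi 0) :
    ContinuousOn (fun u : ℝ => (Real.exp (-(c * u)) - 1) / u ^ ((3:ℝ)/2)) s := by
  apply ContinuousOn.div
  · exact ((Real.continuous_exp.comp (continuous_const.mul continuous_id).neg).sub
      continuous_const).continuousOn
  · intro u hu
    exact (Real.continuousAt_rpow_const u _ (Or.inl (ne_of_gt (hs hu)))).continuousWithinAt
  · intro u hu
    exact (Real.rpow_pos_of_pos (hs hu) _).ne'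

lemma intKey (c : ℝ) (hc : 0 < c) :
    IntegrableOn (fun u : ℝ => (Real.exp (-(c * u)) - 1) / u ^ ((3:ℝ)/2)) (Ioi 0) := by
  have habs : ∀ u : ℝ, 0 < u →
      ‖(Real.exp (-(c * u)) - 1) / u ^ ((3:ℝ)/2)‖ = (1 - Real.exp (-(c * u))) / u ^ ((3:ℝ)/2) := by
    intro u hu
    rw [norm_div, Real.norm_of_nonneg (Real.rpow_nonneg hu.le _), norm_sub_rev,
      Real.norm_of_nonneg]
    have : Real.exp (-(c * u)) ≤ 1 := Real.exp_le_one_iff.mpr (by nlinarith)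
    linarith
  have h1 : IntegrableOn (fun u : ℝ => (Real.exp (-(c * u)) - 1) / u ^ ((3:ℝ)/2)) (Ioc 0 1) := by
    refine Integrable.mono' (g := fun u => c * u ^ (-(1:ℝ)/2)) ?_
      ((contOnKey c _ (fun u hu => hu.1)).aestronglyMeasurable measurableSet_Ioc) ?_
    · refine Integrable.const_mul ?_ c
      have h := (intervalIntegral.intervalIntegrable_rpow' (a := 0) (b := 1)
        (r := -(1:ℝ)/2) (by norm_num))
      rwa [intervalIntegrable_iff_integrableOn_Ioc_of_le zero_le_one] at h
    · filter_upwards [ae_restrict_mem measurableSet_Ioc] with u hu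
      have hu0 : 0 < u := hu.1
      rw [habs u hu0]
      have hle : 1 - Real.exp (-(c * u)) ≤ c * u := by
        have := Real.add_one_le_exp (-(c * u)); linarith
      calc (1 - Real.exp (-(c * u))) / u ^ ((3:ℝ)/2)
          ≤ (c * u) / u ^ ((3:ℝ)/2) := by
            exact div_le_div_of_nonneg_right hle (Real.rpow_pos_of_pos hu0 _).le |>.trans_eq rfl
        _ = c * u ^ (-(1:ℝ)/2) := by
            rw [mul_div_assoc]
            congr 1
            rw [show u / u ^ ((3:ℝ)/2) = u ^ (1:ℝ) / u ^ ((3:ℝ)/2) by rw [Real.rpow_one],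
              ← Real.rpow_sub hu0]
            norm_num
  have h2 : IntegrableOn (fun u : ℝ => (Real.exp (-(c * u)) - 1) / u ^ ((3:ℝ)/2)) (Ioi 1) := by
    refine Integrable.mono' (g := fun u => u ^ (-(3:ℝ)/2)) ?_
      ((contOnKey c _ (fun u hu => lt_trans (zero_lt_one' ℝ) hu)).aestronglyMeasurable
        measurableSet_Ioi) ?_
    · exact integrableOn_Ioi_rpow_of_lt (by norm_num) zero_lt_one
    · filter_upwards [ae_restrict_mem measurableSet_Ioi] with u hu
      have hu0 : (0:ℝ) < u := lt_trans zero_lt_one hu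
      rw [habs u hu0]
      have hle : 1 - Real.exp (-(c * u)) ≤ 1 := by have := Real.exp_pos (-(c * u)); linarith
      calc (1 - Real.exp (-(c * u))) / u ^ ((3:ℝ)/2)
          ≤ 1 / u ^ ((3:ℝ)/2) :=
            div_le_div_of_nonneg_right hle (Real.rpow_pos_of_pos hu0 _).le
        _ = u ^ (-(3:ℝ)/2) := by
            rw [one_div, ← Real.rpow_neg hu0.le]; norm_num
  have : Ioi (0:ℝ) = Ioc 0 1 ∪ Ioi 1 := (Ioc_union_Ioi_eq_Ioi zero_le_one).symm
  rw [this]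
  exact h1.union h2

lemma rpow_neg32 {u : ℝ} (hu : 0 ≤ u) : u ^ (-(3:ℝ)/2) = (u ^ ((3:ℝ)/2))⁻¹ := by
  rw [show (-3:ℝ)/2 = -((3:ℝ)/2) by norm_num, Real.rpow_neg hu]

lemma valKey (c : ℝ) (hc : 0 < c) :
    ∫ u in Ioi (0:ℝ), (Real.exp (-(c * u)) - 1) / u ^ ((3:ℝ)/2)
      = -(2 * Real.sqrt Real.pi * Real.sqrt c) := by
  set F : ℝ → ℝ := fun u => -2 * ((Real.exp (-(c * u)) - 1) * u ^ (-(1:ℝ)/2)) with hF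
  set F' : ℝ → ℝ := fun u =>
    (Real.exp (-(c * u)) - 1) * u ^ (-(3:ℝ)/2)
      + 2 * c * (u ^ (-(1:ℝ)/2) * Real.exp (-(c * u))) with hF'
  have hderiv : ∀ u ∈ Ioi (0:ℝ), HasDerivAt F (F' u) u := by
    intro u hu
    have hu0 : 0 < u := hu
    have h1 : HasDerivAt (fun u : ℝ => Real.exp (-(c * u)) - 1)
        (Real.exp (-(c * u)) * -c) u := by
      have : HasDerivAt (fun u : ℝ => -(c * u)) (-c) u := by
        simpa using ((hasDerivAt_id u).const_mul c).fun_neg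
      exact ((Real.hasDerivAt_exp _).comp u this).sub_const 1
    have h2 : HasDerivAt (fun u : ℝ => u ^ (-(1:ℝ)/2))
        ((-(1:ℝ)/2) * u ^ (-(1:ℝ)/2 - 1)) u :=
      Real.hasDerivAt_rpow_const (Or.inl hu0.ne')
    have h3 := (h1.mul h2).const_mul (-2)
    convert h3 using 1
    · rfl
    · rfl
    · rfl
    rw [hF']
    ring_nf
  have hcont : ContinuousWithinAt F (Ici 0) 0 := by
    have hF0 : F 0 = 0 := by simp [hF]
    rw [ContinuousWithinAt, hF0]
    apply squeeze_zero_norm' (a := fun u : ℝ => 2 * c * u ^ ((1:ℝ)/2))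
    · filter_upwards [self_mem_nhdsWithin] with u hu
      rcases eq_or_lt_of_le (mem_Ici.mp hu) with h | h
      · rw [← h]
        simp [hF, Real.zero_rpow (by norm_num : ((1:ℝ)/2) ≠ 0)]
      · have hle : |Real.exp (-(c * u)) - 1| ≤ c * u := by
          rw [abs_sub_comm, abs_of_nonneg]
          · have := Real.add_one_le_exp (-(c * u)); linarith
          · have : Real.exp (-(c * u)) ≤ 1 := Real.exp_le_one_iff.mpr (by nlinarith)
            linarith
        rw [hF]
        rw [norm_mul, norm_mul, Real.norm_of_nonneg (Real.rpow_nonneg h.le _)]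
        have h2 : ‖(-2 : ℝ)‖ = 2 := by norm_num
        rw [h2]
        calc 2 * (‖Real.exp (-(c * u)) - 1‖ * u ^ (-(1:ℝ)/2))
            ≤ 2 * ((c * u) * u ^ (-(1:ℝ)/2)) := by
              have := mul_le_mul_of_nonneg_right hle (Real.rpow_nonneg h.le (-(1:ℝ)/2))
              rw [Real.norm_eq_abs]
              linarith
          _ = 2 * c * u ^ ((1:ℝ)/2) := by
              rw [mul_assoc, mul_assoc]
              congr 2
              rw [show u * u ^ (-(1:ℝ)/2) = u ^ (1:ℝ) * u ^ (-(1:ℝ)/2) by rw [Real.rpow_one],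
                ← Real.rpow_add h]
              norm_num
    · have h2 : Tendsto (fun u : ℝ => u ^ ((1:ℝ)/2)) (nhdsWithin 0 (Ici 0)) (nhds 0) := by
        have := (Real.continuousAt_rpow_const 0 ((1:ℝ)/2)
          (Or.inr (by norm_num))).continuousWithinAt (s := Ici 0)
        simpa [ContinuousWithinAt, Real.zero_rpow (by norm_num : (1:ℝ)/2 ≠ 0)] using this
      simpa using (h2.const_mul (2 * c))
  have htop : Tendsto F atTop (nhds 0) := by
    have h1 : Tendsto (fun u : ℝ => Real.exp (-(c * u)) - 1) atTop (nhds (0 - 1)) := by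
      refine Tendsto.sub_const ?_ 1
      exact Real.tendsto_exp_atBot.comp
        (tendsto_neg_atTop_atBot.comp (tendsto_id.const_mul_atTop hc))
    have h2 : Tendsto (fun u : ℝ => u ^ (-(1:ℝ)/2)) atTop (nhds 0) := by
      have := tendsto_rpow_neg_atTop (y := (1:ℝ)/2) (by norm_num)
      simpa [neg_div] using this
    have h3 := ((h1.mul h2).const_mul (-2))
    rw [hF]
    simpa using h3
  have hF'int : IntegrableOn F' (Ioi 0) := by
    apply Integrable.add
    · apply (intKey c hc).congr_fun ?_ measurableSet_Ioi
      intro u hu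
      show (Real.exp (-(c * u)) - 1) / u ^ ((3:ℝ)/2)
          = (Real.exp (-(c * u)) - 1) * u ^ (-(3:ℝ)/2)
      rw [rpow_neg32 (le_of_lt hu)]
      exact div_eq_mul_inv _ _
    · exact ((sqb_intG c hc).const_mul _)
  have hFTC := integral_Ioi_of_hasDerivAt_of_tendsto hcont hderiv hF'int htop
  have hF0 : F 0 = 0 := by simp [hF]
  rw [hF0, sub_zero] at hFTC
  have hsplit : ∫ u in Ioi (0:ℝ), (Real.exp (-(c * u)) - 1) / u ^ ((3:ℝ)/2)
      = (∫ u in Ioi (0:ℝ), F' u)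
        - ∫ u in Ioi (0:ℝ), 2 * c * (u ^ (-(1:ℝ)/2) * Real.exp (-(c * u))) := by
    rw [← integral_sub hF'int ((sqb_intG c hc).const_mul _)]
    apply setIntegral_congr_fun measurableSet_Ioi
    intro u hu
    simp only [hF']
    rw [rpow_neg32 (le_of_lt (mem_Ioi.mp hu))]
    ring
  rw [hsplit, hFTC, integral_const_mul, sqb_valG c hc, zero_sub]
  have hs : Real.sqrt c ≠ 0 := (Real.sqrt_pos.mpr hc).ne'
  congr 1
  rw [mul_div_assoc', div_eq_iff hs]
  linear_combination (-(2 * Real.sqrt Real.pi)) * Real.mul_self_sqrt hc.le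

end Aux
section Main
open Real MeasureTheory Set Filter Topology

private noncomputable def sqbG (x : ℝ) (n : ℕ) : ℝ → ℝ := fun u =>
  x ^ n / ((n.factorial : ℝ) * (n.factorial : ℝ))
    * ((Real.exp (-((n : ℝ) * u)) - 1) / u ^ ((3:ℝ)/2))

private lemma sqbG_zero (x : ℝ) : sqbG x 0 = fun _ => 0 := by
  funext u; simp [sqbG]

private lemma sqbG_int (x : ℝ) (n : ℕ) :
    IntegrableOn (sqbG x n) (Ioi 0) := by
  rcases Nat.eq_zero_or_pos n with h | h
  · subst h; rw [sqbG_zero]; exact integrable_zero _ _ _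
  · exact (intKey (n : ℝ) (by exact_mod_cast h)).const_mul _

private lemma sqbG_val (x : ℝ) (n : ℕ) :
    ∫ u in Ioi (0:ℝ), sqbG x n u
      = x ^ n / ((n.factorial : ℝ) * (n.factorial : ℝ))
          * (-(2 * Real.sqrt Real.pi * Real.sqrt n)) := by
  rcases Nat.eq_zero_or_pos n with h | h
  · subst h; rw [sqbG_zero]; simp
  · simp only [sqbG]
    rw [integral_const_mul, valKey (n : ℝ) (by exact_mod_cast h)]

private lemma sqbG_norm_val (x : ℝ) (n : ℕ) :
    ∫ u in Ioi (0:ℝ), ‖sqbG x n u‖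
      = |x| ^ n / ((n.factorial : ℝ) * (n.factorial : ℝ))
          * (2 * Real.sqrt Real.pi * Real.sqrt n) := by
  rcases Nat.eq_zero_or_pos n with h | h
  · subst h; rw [sqbG_zero]; simp
  · have hc : (0:ℝ) < n := by exact_mod_cast h
    have : ∀ u ∈ Ioi (0:ℝ), ‖sqbG x n u‖
        = |x| ^ n / ((n.factorial : ℝ) * (n.factorial : ℝ))
            * (-((Real.exp (-((n : ℝ) * u)) - 1) / u ^ ((3:ℝ)/2))) := by
      intro u hu
      have hu0 : (0:ℝ) < u := hu
      simp only [sqbG]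
      rw [norm_mul, norm_div, norm_div, norm_mul]
      rw [Real.norm_of_nonneg (Real.rpow_nonneg hu0.le _)]
      have he : Real.exp (-((n:ℝ) * u)) ≤ 1 := Real.exp_le_one_iff.mpr (by nlinarith)
      rw [Real.norm_of_nonpos (by linarith : Real.exp (-((n:ℝ) * u)) - 1 ≤ 0)]
      simp only [norm_pow, Real.norm_eq_abs, abs_abs, Nat.abs_cast]
      rw [neg_div, neg_div']
    rw [setIntegral_congr_fun measurableSet_Ioi this, integral_const_mul, integral_neg,
      valKey (n : ℝ) hc]
    ring_nf

private lemma sqbG_summable_norm (x : ℝ) :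
    Summable fun n : ℕ => ∫ u in Ioi (0:ℝ), ‖sqbG x n u‖ := by
  have hbound : ∀ n : ℕ,
      ∫ u in Ioi (0:ℝ), ‖sqbG x n u‖
        ≤ (2 * Real.sqrt Real.pi) * ((2 * |x|) ^ n / (n.factorial : ℝ)) := by
    intro n
    rw [sqbG_norm_val]
    have hfact1 : (1:ℝ) ≤ (n.factorial : ℝ) := by exact_mod_cast Nat.one_le_iff_ne_zero.mpr n.factorial_ne_zero
    have hfactpos : (0:ℝ) < (n.factorial : ℝ) := by positivity
    have hsn : Real.sqrt n ≤ 2 ^ n := by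
      rw [show ((2:ℝ) ^ n) = Real.sqrt ((2 ^ n) ^ 2) by
        rw [Real.sqrt_sq (by positivity)]]
      apply Real.sqrt_le_sqrt
      have h1 : (n:ℝ) ≤ 2 ^ n := by
        exact_mod_cast (Nat.lt_two_pow_self (n := n)).le
      have h2 : (1:ℝ) ≤ 2 ^ n := one_le_pow₀ (by norm_num)
      nlinarith
    calc |x| ^ n / ((n.factorial : ℝ) * (n.factorial : ℝ)) * (2 * Real.sqrt Real.pi * Real.sqrt n)
        = (2 * Real.sqrt Real.pi) * ((|x| ^ n * Real.sqrt n) / ((n.factorial : ℝ) * (n.factorial : ℝ))) := by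
          ring
      _ ≤ (2 * Real.sqrt Real.pi) * ((|x| ^ n * 2 ^ n) / (n.factorial : ℝ)) := by
          apply mul_le_mul_of_nonneg_left ?_ (by positivity)
          apply div_le_div₀ (by positivity)
            (mul_le_mul_of_nonneg_left hsn (by positivity)) hfactpos
            (le_mul_of_one_le_right hfactpos.le hfact1)
      _ = (2 * Real.sqrt Real.pi) * ((2 * |x|) ^ n / (n.factorial : ℝ)) := by
          rw [mul_pow]; ring
  apply Summable.of_nonneg_of_le
    (fun n => integral_nonneg (fun u => norm_nonneg _)) hbound
  exact (Real.summable_pow_div_factorial (2 * |x|)).mul_left _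

private lemma sqbS_summable (x u : ℝ) (hu : 0 ≤ u) :
    Summable fun n : ℕ => x ^ n * Real.exp (-(n:ℝ) * u)
      / ((n.factorial : ℝ) * (n.factorial : ℝ)) := by
  apply Summable.of_norm_bounded (Real.summable_pow_div_factorial |x|)
  intro n
  have hfact1 : (1:ℝ) ≤ (n.factorial : ℝ) := by exact_mod_cast Nat.one_le_iff_ne_zero.mpr n.factorial_ne_zero
  have hfactpos : (0:ℝ) < (n.factorial : ℝ) := by positivity
  have he : Real.exp (-(n:ℝ) * u) ≤ 1 := Real.exp_le_one_iff.mpr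
    (by rw [neg_mul]; exact neg_nonpos.mpr (by positivity))
  rw [norm_div, norm_mul, norm_pow, Real.norm_eq_abs x,
    Real.norm_of_nonneg (Real.exp_pos _).le,
    Real.norm_of_nonneg (by positivity : (0:ℝ) ≤ (n.factorial : ℝ) * (n.factorial : ℝ))]
  refine div_le_div₀ (by positivity) ?_ hfactpos
    (le_mul_of_one_le_right hfactpos.le hfact1)
  calc |x| ^ n * Real.exp (-(n:ℝ) * u) ≤ |x| ^ n * 1 :=
        mul_le_mul_of_nonneg_left he (by positivity)
    _ = |x| ^ n := mul_one _

end Main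

open Real MeasureTheory Set Filter Topology in
theorem sqrt_bessel_integral_rep (x : ℝ) :
    (∑' n : ℕ, Real.sqrt n / ((n.factorial : ℝ) * (n.factorial : ℝ)) * x ^ n)
      = -(1 / (2 * Real.sqrt Real.pi)) *
          ∫ u in Set.Ioi (0 : ℝ),
            ((∑' n : ℕ, x ^ n * Real.exp (-(n : ℝ) * u) /
                ((n.factorial : ℝ) * (n.factorial : ℝ))) -
              (∑' n : ℕ, x ^ n * Real.exp (-(n : ℝ) * 0) /
                ((n.factorial : ℝ) * (n.factorial : ℝ)))) / u ^ ((3 : ℝ) / 2) := by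
  have hpi : Real.sqrt Real.pi ≠ 0 := (Real.sqrt_pos.mpr Real.pi_pos).ne'
  have heq : ∀ u ∈ Ioi (0:ℝ),
      ((∑' n : ℕ, x ^ n * Real.exp (-(n : ℝ) * u) /
          ((n.factorial : ℝ) * (n.factorial : ℝ))) -
        (∑' n : ℕ, x ^ n * Real.exp (-(n : ℝ) * 0) /
          ((n.factorial : ℝ) * (n.factorial : ℝ)))) / u ^ ((3 : ℝ) / 2)
        = ∑' n : ℕ, sqbG x n u := by
    intro u hu
    rw [← ((sqbS_summable x u (le_of_lt hu)).hasSum.sub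
      (sqbS_summable x 0 le_rfl).hasSum).tsum_eq, ← tsum_div_const]
    refine tsum_congr fun n => ?_
    simp only [sqbG, neg_mul, mul_zero, neg_zero, Real.exp_zero]
    ring
  rw [setIntegral_congr_fun measurableSet_Ioi heq,
    ← integral_tsum_of_summable_integral_norm (fun n => sqbG_int x n) (sqbG_summable_norm x)]
  have hval : (∑' n : ℕ, ∫ u in Ioi (0:ℝ), sqbG x n u)
      = ∑' n : ℕ, x ^ n / ((n.factorial : ℝ) * (n.factorial : ℝ))
          * (-(2 * Real.sqrt Real.pi * Real.sqrt n)) :=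
    tsum_congr fun n => sqbG_val x n
  rw [hval, ← tsum_mul_left]
  refine tsum_congr fun n => ?_
  have hfact : ((n.factorial : ℝ) * (n.factorial : ℝ)) ≠ 0 := by positivity
  field_simp
end

section
/- For every real number x, \sum_{n=1}^{\infty} \frac{\sqrt{n}}{n! \, n!} x^n = \frac{1}{2\sqrt{\pi}} \int_0^1 \left[ B(0,x) - B(0,xv) \right] \frac{dv}{v \, (-\ln v)^{3/2}}, where B(0,x) := \sum_{n=0}^{\infty} \frac{x^n}{n! \, n!}. -/
/-!
Integrating by parts against `t ^ s / s` gives, for `-1 < s < 0` and `a ≥ 0`,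
`∫₀^∞ (1 - e^{-at}) t^{s-1} dt = -(a/s) ∫₀^∞ e^{-at} t^s dt = -Γ(s) a^{-s}`.
At `s = -1/2` this reads `∫₀^∞ (1 - e^{-nt}) t^{-3/2} dt = 2√π √n`, and the substitution
`v = e^{-t}` turns it into `∫₀¹ (1 - vⁿ) / (v (-log v)^{3/2}) dv = 2√π √n`.
Multiplying by `xⁿ / (n!)²` and summing over `n` gives the theorem; since the kernel is
nonnegative, sum and integral may be exchanged as soon as `∑ |xⁿ / (n!)²| √n < ∞`,
which follows from `√n ≤ n!`.
-/

open MeasureTheory Set Filter Topology Real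
open scoped Nat

lemma one_sub_exp_neg_nonneg {y : ℝ} (hy : 0 ≤ y) : 0 ≤ 1 - exp (-y) :=
  sub_nonneg.2 (exp_le_one_iff.2 (neg_nonpos.2 hy))

lemma one_sub_exp_neg_le (y : ℝ) : 1 - exp (-y) ≤ y := by
  linarith [add_one_le_exp (-y)]

lemma one_sub_exp_neg_le_one (y : ℝ) : 1 - exp (-y) ≤ 1 := by
  linarith [exp_pos (-y)]

section OneSubExpMellin

variable {a s : ℝ}

lemma norm_one_sub_exp_neg_mul_mul_rpow_le (ha : 0 ≤ a) {t : ℝ} (ht : 0 < t) (r : ℝ) :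
    ‖(1 - exp (-(a * t))) * t ^ r‖ ≤ a * t ^ (r + 1) ∧
      ‖(1 - exp (-(a * t))) * t ^ r‖ ≤ t ^ r := by
  have hr : 0 ≤ t ^ r := rpow_nonneg ht.le r
  rw [norm_of_nonneg (mul_nonneg (one_sub_exp_neg_nonneg (mul_nonneg ha ht.le)) hr),
    rpow_add_one ht.ne' r]
  constructor
  · calc (1 - exp (-(a * t))) * t ^ r ≤ a * t * t ^ r :=
          mul_le_mul_of_nonneg_right (one_sub_exp_neg_le _) hr
      _ = a * (t ^ r * t) := by ring
  · exact mul_le_of_le_one_left hr (one_sub_exp_neg_le_one _)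

lemma integrableOn_one_sub_exp_neg_mul_mul_rpow (ha : 0 ≤ a) (hs1 : -1 < s) (hs0 : s < 0) :
    IntegrableOn (fun t ↦ (1 - exp (-(a * t))) * t ^ (s - 1)) (Ioi 0) := by
  have hmeas : AEStronglyMeasurable (fun t ↦ (1 - exp (-(a * t))) * t ^ (s - 1))
      (volume.restrict (Ioi 0)) :=
    (((continuous_const.sub (continuous_const.mul continuous_id).neg.rexp).continuousOn).mul
      (continuousOn_id.rpow_const fun t ht ↦ Or.inl (ne_of_gt ht))).aestronglyMeasurable
      measurableSet_Ioi
  rw [← Ioc_union_Ioi_eq_Ioi zero_le_one]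
  refine IntegrableOn.union ?_ ?_
  · have hint : IntegrableOn (fun t : ℝ ↦ a * t ^ s) (Ioc 0 1) :=
      ((intervalIntegrable_iff_integrableOn_Ioc_of_le zero_le_one).1
        (intervalIntegral.intervalIntegrable_rpow' hs1)).const_mul a
    refine hint.mono' (hmeas.mono_set Ioc_subset_Ioi_self) ?_
    filter_upwards [ae_restrict_mem measurableSet_Ioc] with t ht
    simpa using (norm_one_sub_exp_neg_mul_mul_rpow_le ha ht.1 (s - 1)).1
  · refine (integrableOn_Ioi_rpow_of_lt (by linarith : s - 1 < -1) one_pos).mono'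
      (hmeas.mono_set (Ioi_subset_Ioi zero_le_one)) ?_
    filter_upwards [ae_restrict_mem measurableSet_Ioi] with t ht
    exact (norm_one_sub_exp_neg_mul_mul_rpow_le ha (one_pos.trans ht) (s - 1)).2

lemma tendsto_one_sub_exp_neg_mul_mul_rpow_nhdsGT_zero (ha : 0 ≤ a) (hs1 : -1 < s) :
    Tendsto (fun t ↦ (1 - exp (-(a * t))) * t ^ s) (𝓝[>] 0) (𝓝 0) := by
  refine squeeze_zero_norm' ?_ (a := fun t ↦ a * t ^ (s + 1)) ?_
  · filter_upwards [self_mem_nhdsWithin] with t ht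
    exact (norm_one_sub_exp_neg_mul_mul_rpow_le ha ht s).1
  · have h := ((continuous_rpow_const (by linarith : 0 ≤ s + 1)).tendsto 0).const_mul a
    rw [zero_rpow (by linarith), mul_zero] at h
    exact h.mono_left nhdsWithin_le_nhds

lemma tendsto_one_sub_exp_neg_mul_mul_rpow_atTop (ha : 0 ≤ a) (hs0 : s < 0) :
    Tendsto (fun t ↦ (1 - exp (-(a * t))) * t ^ s) atTop (𝓝 0) := by
  refine squeeze_zero_norm' ?_ (a := fun t ↦ t ^ s) ?_
  · filter_upwards [eventually_gt_atTop 0] with t ht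
    exact (norm_one_sub_exp_neg_mul_mul_rpow_le ha ht s).2
  · simpa using tendsto_rpow_neg_atTop (neg_pos.2 hs0)

theorem integral_one_sub_exp_neg_mul_mul_rpow (ha : 0 ≤ a) (hs1 : -1 < s) (hs0 : s < 0) :
    ∫ t in Ioi 0, (1 - exp (-(a * t))) * t ^ (s - 1) = -Gamma s * a ^ (-s) := by
  rcases ha.eq_or_lt with rfl | ha
  · simp [zero_rpow (neg_ne_zero.2 hs0.ne)]
  have hu : ∀ t ∈ Ioi (0 : ℝ),
      HasDerivAt (fun t ↦ 1 - exp (-(a * t))) (a * exp (-(a * t))) t :=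
    fun t _ ↦ by simpa [mul_comm] using (((hasDerivAt_id t).const_mul a).neg.exp).const_sub 1
  have hv : ∀ t ∈ Ioi (0 : ℝ), HasDerivAt (fun t ↦ s⁻¹ * t ^ s) (t ^ (s - 1)) t :=
    fun t ht ↦ by simpa [← mul_assoc, inv_mul_cancel₀ hs0.ne] using
      (hasDerivAt_rpow_const (p := s) (Or.inl (ne_of_gt ht))).const_mul s⁻¹
  have hu'v : IntegrableOn (fun t ↦ a * exp (-(a * t)) * (s⁻¹ * t ^ s)) (Ioi 0) := by
    refine IntegrableOn.congr_fun
      ((integrableOn_rpow_mul_exp_neg_mul_rpow hs1 one_pos ha).const_mul (a * s⁻¹))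
      (fun t _ ↦ ?_) measurableSet_Ioi
    simp only [rpow_one, neg_mul]
    ring
  have h_zero : Tendsto (fun t ↦ (1 - exp (-(a * t))) * (s⁻¹ * t ^ s)) (𝓝[>] 0) (𝓝 0) := by
    simpa [mul_left_comm] using
      (tendsto_one_sub_exp_neg_mul_mul_rpow_nhdsGT_zero ha.le hs1).const_mul s⁻¹
  have h_infty : Tendsto (fun t ↦ (1 - exp (-(a * t))) * (s⁻¹ * t ^ s)) atTop (𝓝 0) := by
    simpa [mul_left_comm] using
      (tendsto_one_sub_exp_neg_mul_mul_rpow_atTop ha.le hs0).const_mul s⁻¹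
  have hIBP := integral_Ioi_mul_deriv_eq_deriv_mul hu hv
    (integrableOn_one_sub_exp_neg_mul_mul_rpow ha.le hs1 hs0) hu'v h_zero h_infty
  have hGamma : ∫ t in Ioi 0, a * exp (-(a * t)) * (s⁻¹ * t ^ s)
      = a * s⁻¹ * ∫ t in Ioi 0, t ^ ((s + 1) - 1) * exp (-(a * t)) := by
    rw [← integral_const_mul]
    refine setIntegral_congr_fun measurableSet_Ioi fun t _ ↦ ?_
    simp only [add_sub_cancel_right]
    ring
  rw [hIBP, hGamma, integral_rpow_mul_exp_neg_mul_Ioi (by linarith) ha, Gamma_add_one hs0.ne,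
    one_div, inv_rpow ha.le, ← rpow_neg ha.le, neg_add, ← sub_eq_add_neg, rpow_sub_one ha.ne']
  field_simp [hs0.ne]
  ring

end OneSubExpMellin

section ExpNegSubstitution

variable {E : Type*} [NormedAddCommGroup E] [NormedSpace ℝ E]

lemma image_exp_neg_Ioi_zero : (fun t : ℝ ↦ exp (-t)) '' Ioi 0 = Ioo 0 1 := by
  ext y
  constructor
  · rintro ⟨t, ht, rfl⟩
    exact ⟨exp_pos _, exp_lt_one_iff.2 (neg_neg_iff_pos.mpr ht)⟩
  · rintro ⟨hy0, hy1⟩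
    exact ⟨-log y, by simpa using log_neg hy0 hy1, by simp [exp_log hy0]⟩

lemma hasDerivWithinAt_exp_neg (s : Set ℝ) (t : ℝ) :
    HasDerivWithinAt (fun t ↦ exp (-t)) (-exp (-t)) s t := by
  simpa using (hasDerivAt_neg t).exp.hasDerivWithinAt

lemma integral_Ioo_zero_one_eq_integral_Ioi_exp_neg (g : ℝ → E) :
    ∫ v in Ioo 0 1, g v = ∫ t in Ioi 0, exp (-t) • g (exp (-t)) := by
  rw [← image_exp_neg_Ioi_zero, integral_image_eq_integral_abs_deriv_smul measurableSet_Ioi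
    (fun t _ ↦ hasDerivWithinAt_exp_neg _ t) (exp_injective.comp neg_injective).injOn]
  simp_rw [abs_neg, abs_of_pos (exp_pos _)]

lemma integrableOn_Ioo_zero_one_iff_integrableOn_Ioi_exp_neg (g : ℝ → E) :
    IntegrableOn g (Ioo 0 1) ↔ IntegrableOn (fun t ↦ exp (-t) • g (exp (-t))) (Ioi 0) := by
  rw [← image_exp_neg_Ioi_zero, integrableOn_image_iff_integrableOn_abs_deriv_smul
    measurableSet_Ioi (fun t _ ↦ hasDerivWithinAt_exp_neg _ t)
    (exp_injective.comp neg_injective).injOn]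
  simp_rw [abs_neg, abs_of_pos (exp_pos _)]

end ExpNegSubstitution

lemma exp_neg_mul_one_sub_pow_div (n : ℕ) {t : ℝ} (ht : 0 < t) :
    exp (-t) • ((1 - exp (-t) ^ n) / (exp (-t) * (-log (exp (-t))) ^ ((3 : ℝ) / 2)))
      = (1 - exp (-(n * t))) * t ^ (-(1 / 2 : ℝ) - 1) := by
  rw [smul_eq_mul, log_exp, neg_neg, ← exp_nat_mul, mul_neg,
    show -(1 / 2 : ℝ) - 1 = -(3 / 2) by norm_num, rpow_neg ht.le]
  field_simp

lemma integrableOn_one_sub_pow_div_mul_neg_log_rpow (n : ℕ) :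
    IntegrableOn (fun v ↦ (1 - v ^ n) / (v * (-log v) ^ ((3 : ℝ) / 2))) (Ioo 0 1) := by
  rw [integrableOn_Ioo_zero_one_iff_integrableOn_Ioi_exp_neg]
  exact (integrableOn_one_sub_exp_neg_mul_mul_rpow n.cast_nonneg (by norm_num)
    (by norm_num)).congr_fun (fun t ht ↦ (exp_neg_mul_one_sub_pow_div n ht).symm)
    measurableSet_Ioi

lemma integral_one_sub_pow_div_mul_neg_log_rpow (n : ℕ) :
    ∫ v in Ioo 0 1, (1 - v ^ n) / (v * (-log v) ^ ((3 : ℝ) / 2)) = 2 * √π * √n := by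
  have hGamma : Gamma (-(1 / 2)) = -2 * √π := by
    have h := Gamma_add_one (s := -(1 / 2)) (by norm_num)
    rw [show -(1 / 2 : ℝ) + 1 = 1 / 2 by norm_num, Gamma_one_half_eq] at h
    linarith
  rw [integral_Ioo_zero_one_eq_integral_Ioi_exp_neg, setIntegral_congr_fun measurableSet_Ioi
    (fun t ht ↦ exp_neg_mul_one_sub_pow_div n ht), integral_one_sub_exp_neg_mul_mul_rpow
    n.cast_nonneg (by norm_num) (by norm_num), hGamma, neg_neg, ← sqrt_eq_rpow]
  ring

lemma one_sub_pow_div_mul_neg_log_rpow_nonneg (n : ℕ) {v : ℝ} (hv : v ∈ Ioo 0 1) :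
    0 ≤ (1 - v ^ n) / (v * (-log v) ^ ((3 : ℝ) / 2)) := by
  obtain ⟨hv0, hv1⟩ := hv
  have : 0 < -log v := neg_pos.2 (log_neg hv0 hv1)
  have : v ^ n ≤ 1 := pow_le_one₀ hv0.le hv1.le
  apply div_nonneg <;> [linarith; positivity]

section SeriesInterchange

variable {a : ℕ → ℝ}

lemma summable_mul_pow_of_summable_norm_mul_sqrt (ha : Summable fun n ↦ ‖a n‖ * √n) {v : ℝ}
    (hv : ‖v‖ ≤ 1) : Summable fun n ↦ a n * v ^ n := by
  refine ha.of_norm_bounded_eventually ?_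
  filter_upwards [eventually_cofinite_ne 0] with n hn
  calc ‖a n * v ^ n‖ ≤ ‖a n‖ * 1 := by
        rw [norm_mul, norm_pow]
        gcongr
        exact pow_le_one₀ (norm_nonneg v) hv
    _ ≤ ‖a n‖ * √n := by
        gcongr
        exact one_le_sqrt.2 (by exact_mod_cast Nat.one_le_iff_ne_zero.2 hn)

theorem integral_tsum_sub_tsum_mul_pow_div_mul_neg_log_rpow
    (ha : Summable fun n ↦ ‖a n‖ * √n) :
    ∫ v in Ioo 0 1, (∑' n, a n - ∑' n, a n * v ^ n) / (v * (-log v) ^ ((3 : ℝ) / 2))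
      = 2 * √π * ∑' n, a n * √n := by
  set K : ℕ → ℝ → ℝ := fun n v ↦ (1 - v ^ n) / (v * (-log v) ^ ((3 : ℝ) / 2))
  have hseries :
      EqOn (fun v ↦ (∑' n, a n - ∑' n, a n * v ^ n) / (v * (-log v) ^ ((3 : ℝ) / 2)))
      (fun v ↦ ∑' n, a n * K n v) (Ioo 0 1) := by
    intro v hv
    have hone : Summable a := by
      simpa using summable_mul_pow_of_summable_norm_mul_sqrt ha (v := 1) (by simp)
    have hpow := summable_mul_pow_of_summable_norm_mul_sqrt ha (v := v)
      (by rw [norm_of_nonneg hv.1.le]; exact hv.2.le)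
    dsimp only
    rw [← hone.tsum_sub hpow, ← tsum_div_const]
    exact tsum_congr fun n ↦ by ring
  have hnorm : ∀ n, ∫ v in Ioo 0 1, ‖a n * K n v‖ = ‖a n‖ * (2 * √π * √n) := fun n ↦ by
    rw [← integral_one_sub_pow_div_mul_neg_log_rpow n, ← integral_const_mul]
    refine setIntegral_congr_fun measurableSet_Ioo fun v hv ↦ ?_
    rw [norm_mul, norm_of_nonneg (one_sub_pow_div_mul_neg_log_rpow_nonneg n hv)]
  rw [setIntegral_congr_fun measurableSet_Ioo hseries, ← integral_tsum_of_summable_integral_norm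
    (fun n ↦ (integrableOn_one_sub_pow_div_mul_neg_log_rpow n).const_mul (a n))]
  · simp_rw [integral_const_mul, integral_one_sub_pow_div_mul_neg_log_rpow, ← tsum_mul_left]
    exact tsum_congr fun n ↦ by ring
  · exact (ha.mul_left (2 * √π)).congr fun n ↦ ((hnorm n).trans (by ring)).symm

end SeriesInterchange

lemma sqrt_natCast_le_factorial (n : ℕ) : √(n : ℝ) ≤ n ! :=
  calc √(n : ℝ) ≤ n :=
        (sqrt_le_left n.cast_nonneg).2 (by exact_mod_cast Nat.le_self_pow two_ne_zero n)
    _ ≤ n ! := by exact_mod_cast n.self_le_factorial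

theorem sqrt_bessel_integral_rep' (x : ℝ) :
    (∑' n : ℕ, Real.sqrt n / ((n.factorial : ℝ) * (n.factorial : ℝ)) * x ^ n)
      = (1 / (2 * Real.sqrt Real.pi)) *
          ∫ v in Set.Ioo (0 : ℝ) 1,
            ((∑' n : ℕ, x ^ n / ((n.factorial : ℝ) * (n.factorial : ℝ))) -
              (∑' n : ℕ, (x * v) ^ n / ((n.factorial : ℝ) * (n.factorial : ℝ)))) /
            (v * (-Real.log v) ^ ((3 : ℝ) / 2)) := by
  have hsummable : Summable fun n : ℕ ↦ ‖x ^ n / ((n ! : ℝ) * n !)‖ * √n := by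
    refine (summable_pow_div_factorial |x|).of_nonneg_of_le (fun n ↦ by positivity) fun n ↦ ?_
    rw [norm_div, norm_pow, norm_mul, norm_natCast, norm_eq_abs]
    calc |x| ^ n / (n ! * n !) * √n ≤ |x| ^ n / (n ! * n !) * n ! := by
          gcongr
          exact sqrt_natCast_le_factorial n
      _ = |x| ^ n / n ! := by field_simp
  have hscale : ∀ v : ℝ, ∀ n : ℕ,
      (x * v) ^ n / ((n ! : ℝ) * n !) = x ^ n / ((n ! : ℝ) * n !) * v ^ n := fun v n ↦ by ring
  simp_rw [hscale, integral_tsum_sub_tsum_mul_pow_div_mul_neg_log_rpow hsummable]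
  rw [← mul_assoc, one_div_mul_cancel (by positivity), one_mul]
  exact tsum_congr fun n ↦ by ring
end

section
/- For every positive integer n and every real s with 0 < s < 1, \int_0^1 \frac{1 - v^n}{v \, (-\ln v)^{1+s}} \, dv = -\, n^s \, \Gamma(-s). -/
open MeasureTheory Set Real Filter Topology

lemma aux_integrableOn_G {s : ℝ} (hs0 : 0 < s) (hs1 : s < 1) :
    IntegrableOn (fun t : ℝ => (1 - Real.exp (-t)) * t ^ (-(1 + s))) (Ioi (0:ℝ)) := by
  have hmeas : ∀ S : Set ℝ, AEStronglyMeasurable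
      (fun t : ℝ => (1 - Real.exp (-t)) * t ^ (-(1 + s))) (volume.restrict S) := by
    intro S
    apply Measurable.aestronglyMeasurable
    fun_prop
  have hbound : ∀ t : ℝ, 0 < t → 1 - Real.exp (-t) ≤ t := by
    intro t ht
    have := Real.add_one_le_exp (-t)
    linarith
  have hnn : ∀ t : ℝ, 0 < t → 0 ≤ 1 - Real.exp (-t) := by
    intro t ht
    have : Real.exp (-t) ≤ 1 := Real.exp_le_one_iff.2 (by linarith)
    linarith
  rw [← Ioc_union_Ioi_eq_Ioi (zero_le_one (α := ℝ)), integrableOn_union]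
  constructor
  · have hint : IntegrableOn (fun t : ℝ => t ^ (-s)) (Ioc (0:ℝ) 1) := by
      rw [integrableOn_Ioc_iff_integrableOn_Ioo]
      exact (intervalIntegral.integrableOn_Ioo_rpow_iff zero_lt_one).2 (by linarith)
    refine Integrable.mono hint (hmeas _) ?_
    rw [ae_restrict_iff' measurableSet_Ioc]
    filter_upwards with t ht
    have ht0 : 0 < t := ht.1
    rw [Real.norm_eq_abs, Real.norm_eq_abs, abs_of_nonneg (Real.rpow_nonneg ht0.le _),
      abs_of_nonneg (mul_nonneg (hnn t ht0) (Real.rpow_nonneg ht0.le _))]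
    calc (1 - Real.exp (-t)) * t ^ (-(1 + s)) ≤ t * t ^ (-(1 + s)) :=
          mul_le_mul_of_nonneg_right (hbound t ht0) (Real.rpow_nonneg ht0.le _)
      _ = t ^ (-s) := by
          nth_rewrite 1 [← Real.rpow_one t]
          rw [← Real.rpow_add ht0]
          norm_num
  · have hint : IntegrableOn (fun t : ℝ => t ^ (-(1 + s))) (Ioi (1:ℝ)) :=
      integrableOn_Ioi_rpow_of_lt (by linarith) zero_lt_one
    refine Integrable.mono hint (hmeas _) ?_
    rw [ae_restrict_iff' measurableSet_Ioi]
    filter_upwards with t ht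
    have ht0 : (0:ℝ) < t := lt_trans zero_lt_one ht
    rw [Real.norm_eq_abs, Real.norm_eq_abs, abs_of_nonneg (Real.rpow_nonneg ht0.le _),
      abs_of_nonneg (mul_nonneg (hnn t ht0) (Real.rpow_nonneg ht0.le _))]
    have h1 : 1 - Real.exp (-t) ≤ 1 := by
      have := Real.exp_pos (-t); linarith
    nlinarith [Real.rpow_nonneg ht0.le (-(1+s)), hnn t ht0]

lemma aux_integral_G {s : ℝ} (hs0 : 0 < s) (hs1 : s < 1) :
    ∫ t in Ioi (0:ℝ), (1 - Real.exp (-t)) * t ^ (-(1 + s)) = Real.Gamma (1 - s) / s := by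
  have hs0' : s ≠ 0 := hs0.ne'
  have h1s : (0:ℝ) < 1 - s := by linarith
  set u : ℝ → ℝ := fun t => 1 - Real.exp (-t) with hu_def
  set u' : ℝ → ℝ := fun t => Real.exp (-t) with hu'_def
  set v : ℝ → ℝ := fun t => t ^ (-s) / (-s) with hv_def
  set v' : ℝ → ℝ := fun t => t ^ (-(1 + s)) with hv'_def
  have hu : ∀ t ∈ Ioi (0:ℝ), HasDerivAt u (u' t) t := by
    intro t _
    have h := ((Real.hasDerivAt_exp (-t)).comp t (hasDerivAt_neg t)).const_sub 1
    simpa [u, u'] using h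
  have hv : ∀ t ∈ Ioi (0:ℝ), HasDerivAt v (v' t) t := by
    intro t ht
    have h := (Real.hasDerivAt_rpow_const (p := -s) (Or.inl (ne_of_gt (mem_Ioi.mp ht)))).div_const (-s)
    have heq : -s * t ^ (-s - 1) / (-s) = v' t := by
      simp only [v']
      rw [mul_div_cancel_left₀ _ (neg_ne_zero.2 hs0.ne'), show -(1 + s) = -s - 1 by ring]
    exact heq ▸ h
  have huv' : IntegrableOn (u * v') (Ioi (0:ℝ)) := by
    have := aux_integrableOn_G hs0 hs1
    exact this
  have hGam : IntegrableOn (fun t : ℝ => Real.exp (-t) * t ^ (-s)) (Ioi (0:ℝ)) := by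
    have := Real.GammaIntegral_convergent h1s
    simpa [show (1:ℝ) - s - 1 = -s by ring] using this
  have hu'v : IntegrableOn (u' * v) (Ioi (0:ℝ)) := by
    have h2 : IntegrableOn (fun t : ℝ => Real.exp (-t) * t ^ (-s) / (-s)) (Ioi (0:ℝ)) :=
      hGam.div_const (-s)
    refine h2.congr_fun (fun t ht => ?_) measurableSet_Ioi
    simp [u', v, mul_div_assoc]
  have h_zero : Tendsto (u * v) (𝓝[>] (0:ℝ)) (𝓝 0) := by
    have hsq : Tendsto (fun t : ℝ => (1 - Real.exp (-t)) * t ^ (-s)) (𝓝[>] (0:ℝ)) (𝓝 0) := by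
      apply squeeze_zero' (g := fun t : ℝ => t ^ (1 - s))
      · filter_upwards [self_mem_nhdsWithin] with t ht
        have : Real.exp (-t) ≤ 1 := Real.exp_le_one_iff.2 (by simp at ht; linarith)
        have := Real.rpow_nonneg (le_of_lt (show (0:ℝ) < t from ht)) (-s)
        nlinarith
      · filter_upwards [self_mem_nhdsWithin] with t (ht : (0:ℝ) < t)
        have hb : 1 - Real.exp (-t) ≤ t := by
          have := Real.add_one_le_exp (-t); linarith
        calc (1 - Real.exp (-t)) * t ^ (-s) ≤ t * t ^ (-s) :=
              mul_le_mul_of_nonneg_right hb (Real.rpow_nonneg ht.le _)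
          _ = t ^ (1 - s) := by
              nth_rewrite 1 [← Real.rpow_one t]
              rw [← Real.rpow_add ht]
              ring_nf
      · have hc : ContinuousAt (fun t : ℝ => t ^ (1 - s)) 0 :=
          Real.continuousAt_rpow_const 0 (1 - s) (Or.inr h1s.le)
        have h0 : Tendsto (fun t : ℝ => t ^ (1 - s)) (𝓝[>] (0:ℝ)) (𝓝 ((0:ℝ) ^ (1 - s))) :=
          hc.tendsto.mono_left nhdsWithin_le_nhds
        simpa [Real.zero_rpow h1s.ne'] using h0
    have := hsq.div_const (-s)
    simpa [u, v, mul_div_assoc, zero_div, Pi.mul_def] using this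
  have h_infty : Tendsto (u * v) atTop (𝓝 0) := by
    have h1 : Tendsto (fun t : ℝ => 1 - Real.exp (-t)) atTop (𝓝 1) := by
      have : Tendsto (fun t : ℝ => Real.exp (-t)) atTop (𝓝 0) :=
        Real.tendsto_exp_atBot.comp tendsto_neg_atTop_atBot
      simpa using tendsto_const_nhds.sub this
    have h2 : Tendsto (fun t : ℝ => t ^ (-s)) atTop (𝓝 0) := tendsto_rpow_neg_atTop hs0
    have := (h1.mul h2).div_const (-s)
    simpa [u, v, mul_div_assoc, Pi.mul_def] using this
  have key := integral_Ioi_mul_deriv_eq_deriv_mul hu hv huv' hu'v h_zero h_infty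
  have hIval : ∫ t in Ioi (0:ℝ), u' t * v t = Real.Gamma (1 - s) / (-s) := by
    rw [Real.Gamma_eq_integral h1s, show (1:ℝ) - s - 1 = -s by ring, ← integral_div]
    apply setIntegral_congr_fun measurableSet_Ioi
    intro t _
    simp [u', v, mul_div_assoc]
  calc ∫ t in Ioi (0:ℝ), (1 - Real.exp (-t)) * t ^ (-(1 + s)) = ∫ t in Ioi (0:ℝ), u t * v' t := rfl
    _ = 0 - 0 - ∫ t in Ioi (0:ℝ), u' t * v t := key
    _ = Real.Gamma (1 - s) / s := by
        rw [hIval]; field_simp; ring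

theorem integral_one_sub_pow_div_neg_log_rpow (n : ℕ) (hn : 0 < n)
    (s : ℝ) (hs0 : 0 < s) (hs1 : s < 1) :
    ∫ v in Set.Ioo (0 : ℝ) 1, (1 - v ^ n) / (v * (-Real.log v) ^ (1 + s))
      = -((n : ℝ) ^ s * Real.Gamma (-s)) := by
  have hn0 : (0:ℝ) < n := Nat.cast_pos.mpr hn
  set F : ℝ → ℝ := fun v => (1 - v ^ n) / (v * (-Real.log v) ^ (1 + s)) with hF
  have himg : (fun t : ℝ => Real.exp (-t)) '' Ioi (0:ℝ) = Ioo (0:ℝ) 1 := by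
    ext x
    constructor
    · rintro ⟨t, ht, rfl⟩
      have ht0 : (0:ℝ) < t := ht
      exact ⟨Real.exp_pos _, by
        rw [Real.exp_lt_one_iff]; linarith⟩
    · intro hx
      refine ⟨-Real.log x, ?_, by simp [Real.exp_log hx.1]⟩
      have := Real.log_neg hx.1 hx.2
      simpa using this
  have hderiv : ∀ t ∈ Ioi (0:ℝ), HasDerivWithinAt (fun t : ℝ => Real.exp (-t))
      (-Real.exp (-t)) (Ioi (0:ℝ)) t := by
    intro t _
    have h := (Real.hasDerivAt_exp (-t)).comp t (hasDerivAt_neg t)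
    simpa [mul_comm, Function.comp_def] using h.hasDerivWithinAt
  have hinj : InjOn (fun t : ℝ => Real.exp (-t)) (Ioi (0:ℝ)) := by
    intro a _ b _ h
    have := Real.exp_injective h
    linarith
  have hsub := integral_image_eq_integral_abs_deriv_smul measurableSet_Ioi hderiv hinj F
  rw [← himg, hsub]
  have hcong : ∫ t in Ioi (0:ℝ), |(-Real.exp (-t))| • F (Real.exp (-t))
      = ∫ t in Ioi (0:ℝ), (1 - Real.exp (-((n:ℝ) * t))) * t ^ (-(1 + s)) := by
    apply setIntegral_congr_fun measurableSet_Ioi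
    intro t ht
    have ht0 : (0:ℝ) < t := ht
    have hexp := Real.exp_pos (-t)
    have htp : (0:ℝ) < t ^ (1 + s) := Real.rpow_pos_of_pos ht0 _
    simp only [F, smul_eq_mul, abs_neg, abs_of_pos hexp, Real.log_exp, neg_neg]
    rw [← Real.exp_nat_mul, show (n:ℝ) * -t = -((n:ℝ) * t) by ring, Real.rpow_neg ht0.le]
    field_simp
  rw [hcong]
  have hscale : ∫ t in Ioi (0:ℝ), (1 - Real.exp (-((n:ℝ) * t))) * t ^ (-(1 + s))
      = (n:ℝ) ^ s * ∫ t in Ioi (0:ℝ), (1 - Real.exp (-t)) * t ^ (-(1 + s)) := by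
    have h1 : ∀ t ∈ Ioi (0:ℝ), (1 - Real.exp (-((n:ℝ) * t))) * t ^ (-(1 + s))
        = (n:ℝ) ^ (1 + s) * ((1 - Real.exp (-((n:ℝ) * t))) * ((n:ℝ) * t) ^ (-(1 + s))) := by
      intro t ht
      have ht0 : (0:ℝ) < t := ht
      rw [Real.mul_rpow hn0.le ht0.le, Real.rpow_neg hn0.le]
      have h2 : ((n:ℝ) ^ (1 + s)) ≠ 0 := (Real.rpow_pos_of_pos hn0 _).ne'
      field_simp
    rw [setIntegral_congr_fun measurableSet_Ioi h1, MeasureTheory.integral_const_mul,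
      MeasureTheory.integral_comp_mul_left_Ioi
        (fun u : ℝ => (1 - Real.exp (-u)) * u ^ (-(1 + s))) 0 hn0]
    rw [mul_zero, smul_eq_mul, ← mul_assoc]
    congr 1
    rw [Real.rpow_add hn0, Real.rpow_one, mul_comm ((n:ℝ)) _, mul_assoc,
      mul_inv_cancel₀ hn0.ne', mul_one]
  rw [hscale, aux_integral_G hs0 hs1,
    show (1:ℝ) - s = -s + 1 by ring, Real.Gamma_add_one (neg_ne_zero.2 hs0.ne')]
  field_simp
end

section
/- Let (\gamma_k)_{k=0}^{\infty} be a multiplier sequence of non-negative real numbers and fix an integer k \ge 1. Then: (i) for every real t \ne 0, t^k B_k(1/t) = \sum_{j=0}^{k} \binom{k}{j} (t-1)^j \gamma_{k-j}, where B_k(t) = \sum_{j=0}^{k} \binom{k}{j}(1-t)^j \gamma_{k-j} t^{k-j}; and (ii) the polynomial t \mapsto B_k(t) has only real zeros. -/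
/-! Part (i) is the homogeneity of `∑ cⱼ aʲ bᵏ⁻ʲ` in `(a, b)`. For part (ii), reversing the sum
gives `B_k(z) = (1 - z)ᵏ Q(z / (1 - z))` with `Q = ∑ γᵢ (k choose i) xⁱ`, the image of the
real-rooted `(x + 1)ᵏ` under the multiplier sequence; and the Möbius map `z ↦ z / (1 - z)` sends
non-real points to non-real points. -/

open Polynomial Finset

lemma realRooted_X_add_C_pow (a : ℝ) (n : ℕ) : RealRooted ((X + C a) ^ n) := by
  intro z hz
  have hza : z + a = 0 := (pow_eq_zero_iff'.mp (by simpa using hz)).1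
  simp [eq_neg_of_add_eq_zero_left hza]

lemma aeval_applySeq_X_add_one_pow {A : Type*} [CommSemiring A] [Algebra ℝ A]
    (γ : ℕ → ℝ) (k : ℕ) (w : A) :
    aeval w (applySeq γ ((X + 1) ^ k))
      = ∑ i ∈ range (k + 1), algebraMap ℝ A (γ i * k.choose i) * w ^ i := by
  have hdeg : ((X + 1 : ℝ[X]) ^ k).natDegree = k := by
    rw [natDegree_pow, ← C_1, natDegree_X_add_C, mul_one]
  simp only [applySeq, hdeg, map_sum, coeff_X_add_one_pow, map_mul, aeval_C, aeval_X_pow]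

lemma pow_mul_sum_mul_pow_mul_pow {R : Type*} [CommSemiring R] (c : ℕ → R) (t a b : R)
    (k : ℕ) :
    t ^ k * ∑ j ∈ range (k + 1), c j * a ^ j * b ^ (k - j)
      = ∑ j ∈ range (k + 1), c j * (t * a) ^ j * (t * b) ^ (k - j) := by
  rw [mul_sum]
  refine sum_congr rfl fun j hj => ?_
  rw [← Nat.add_sub_cancel' (Nat.le_of_lt_succ (mem_range.mp hj))]
  simp only [Nat.add_sub_cancel_left, mul_pow, pow_add]
  ring

lemma sum_choose_mul_pow_one_sub_mul_pow {K : Type*} [Field K] (c : ℕ → K) {z : K}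
    (hz : 1 - z ≠ 0) (k : ℕ) :
    ∑ j ∈ range (k + 1), (k.choose j : K) * (1 - z) ^ j * c (k - j) * z ^ (k - j)
      = (1 - z) ^ k * ∑ i ∈ range (k + 1), c i * k.choose i * (z / (1 - z)) ^ i := by
  rw [← sum_range_reflect, mul_sum]
  refine sum_congr rfl fun i hi => ?_
  have hik : i ≤ k := Nat.le_of_lt_succ (mem_range.mp hi)
  rw [Nat.add_sub_cancel, Nat.sub_sub_self hik, Nat.choose_symm hik, div_pow,
    ← Nat.sub_add_cancel hik, pow_add, Nat.add_sub_cancel]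
  field_simp

lemma Complex.im_eq_zero_of_im_div_one_sub_eq_zero {z : ℂ} (h : (z / (1 - z)).im = 0) :
    z.im = 0 := by
  rcases eq_or_ne (1 - z) 0 with hz | hz
  · simp [← sub_eq_zero.mp hz]
  set w := z / (1 - z) with hw
  have hzw : z * (1 + w) = w := by rw [hw]; field_simp; ring
  have him : z.im * (1 + w.re) = 0 := by
    simpa [Complex.mul_im, h] using congrArg Complex.im hzw
  refine (mul_eq_zero.mp him).resolve_right fun hre => ?_
  have hw1 : 1 + w = 0 := Complex.ext (by simpa using hre) (by simpa using h)
  rw [hw1, mul_zero] at hzw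
  simp [← hzw] at hre
theorem deformed_polynomial_real_rooted_general (γ : ℕ → ℝ)
    (hγ : IsMultiplierSequence γ) (k : ℕ) :
    (∀ t : ℝ, t ≠ 0 →
      t ^ k * (∑ j ∈ Finset.range (k + 1),
          (k.choose j : ℝ) * (1 - 1 / t) ^ j * γ (k - j) * (1 / t) ^ (k - j))
        = ∑ j ∈ Finset.range (k + 1), (k.choose j : ℝ) * (t - 1) ^ j * γ (k - j)) ∧
    (∀ z : ℂ, (∑ j ∈ Finset.range (k + 1),
        (k.choose j : ℂ) * (1 - z) ^ j * (γ (k - j) : ℂ) * z ^ (k - j)) = 0 →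
      z.im = 0) := by
  constructor
  · intro t ht
    have h := pow_mul_sum_mul_pow_mul_pow (fun j => (k.choose j : ℝ) * γ (k - j)) t (1 - 1 / t)
      (1 / t) k
    rw [mul_sub, mul_one, mul_one_div_cancel ht] at h
    simpa only [one_pow, mul_one, mul_right_comm _ (γ _)] using h
  · intro z hz
    rcases eq_or_ne (1 - z) 0 with hz1 | hz1
    · simp [← sub_eq_zero.mp hz1]
    have hX : RealRooted ((X + 1) ^ k) := by simpa using realRooted_X_add_C_pow 1 k
    refine Complex.im_eq_zero_of_im_div_one_sub_eq_zero (hγ _ hX _ ?_)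
    rw [sum_choose_mul_pow_one_sub_mul_pow (fun i => (γ i : ℂ)) hz1, mul_eq_zero] at hz
    rw [aeval_applySeq_X_add_one_pow]
    simpa [pow_ne_zero k hz1] using hz

theorem deformed_polynomial_real_rooted (γ : ℕ → ℝ) (hγ0 : ∀ k, 0 ≤ γ k)
    (hγ : IsMultiplierSequence γ) (k : ℕ) (hk : 1 ≤ k) :
    (∀ t : ℝ, t ≠ 0 →
      t ^ k * (∑ j ∈ Finset.range (k + 1),
          (k.choose j : ℝ) * (1 - 1 / t) ^ j * γ (k - j) * (1 / t) ^ (k - j))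
        = ∑ j ∈ Finset.range (k + 1), (k.choose j : ℝ) * (t - 1) ^ j * γ (k - j)) ∧
    (∀ z : ℂ, (∑ j ∈ Finset.range (k + 1),
        (k.choose j : ℂ) * (1 - z) ^ j * (γ (k - j) : ℂ) * z ^ (k - j)) = 0 →
      z.im = 0) :=
  deformed_polynomial_real_rooted_general γ hγ k
end
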